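/- In the one-sided weakly dependent Gaussian testing setup, suppose n_1 → ∞ and n_1/n → p_1 ∈ (0, 1] as n → ∞, and let μ_{n_1} = max{μ_i : i ∈ I_1}. If lim_{n_1→∞} √(2 log n_1)/μ_{n_1} < 1, then for both the adjusted Bonferroni procedure (cutoff c_Bon(n, α)) and the Sidak procedure (cutoff c_Sid(n, α)), AnyPwr → 1 as n → ∞. -/

import Mathlib

/-!
AnyPwr is at least the power of the single test at an index `i` with the largest mean,
`1 - Φ(τₙ - μ_{n₁})`. The Gaussian tail bound `1 - Φ(t) ≤ exp(-t²/2)` puts both cutoffs below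
`√(2 log n) + 1`, while `n₁ ≥ p₁ n / 2` gives `√(2 log n₁) ≥ √(2 log n) - 1`, so the ratio
hypothesis yields `μ_{n₁} ≥ (√(2 log n) - 1) / c` for some `c < 1`. Hence `τₙ - μ_{n₁} → -∞`.
-/

open MeasureTheory ProbabilityTheory Filter Asymptotics Finset
open scoped Classical ENNReal NNReal

/-- The standard normal cumulative distribution function `Φ`. -/
noncomputable def Phi (x : ℝ) : ℝ := (ProbabilityTheory.gaussianReal 0 1 (Set.Iic x)).toReal

/-- The inverse of the standard normal cdf, `Φ⁻¹`. -/
noncomputable def PhiInv : ℝ → ℝ := Function.invFun Phi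

/-- The adjusted Bonferroni cutoff `c_Bon(n, α) = Φ⁻¹(1 − (−log(1−α))/n)`. -/
noncomputable def cBon (n : ℕ) (α : ℝ) : ℝ := PhiInv (1 - (-Real.log (1 - α)) / n)

/-- The Sidak cutoff `c_Sid(n, α) = Φ⁻¹((1−α)^{1/n})`. -/
noncomputable def cSid (n : ℕ) (α : ℝ) : ℝ := PhiInv ((1 - α) ^ ((1 : ℝ) / n))

/-- `ρ_m = sup_i |ρ_{i, i+m}|`. -/
noncomputable def rhobar (ρ : ℕ → ℕ → ℝ) (m : ℕ) : ℝ := ⨆ i : ℕ, |ρ i (i + m)|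

/-- `γ = sup_{m ≥ 1} ρ_m`. -/
noncomputable def gammaSup (ρ : ℕ → ℕ → ℝ) : ℝ := ⨆ m : ℕ, rhobar ρ (m + 1)

/-- `γ_m = sup_{j ≥ m} ρ_j`. -/
noncomputable def gammaTail (ρ : ℕ → ℕ → ℝ) (m : ℕ) : ℝ := ⨆ j : {j : ℕ // m ≤ j}, rhobar ρ (j : ℕ)

/-- A weakly dependent standard Gaussian sequence: jointly Gaussian random variables,
each marginally `N(0,1)`, with correlations `ρ i j ∈ (−1,1)` for `i ≠ j`, such that
`γ = sup_{m ≥ 1} ρ_m < 1` and `ρ_m = o(1/log m)`, where `ρ_m = sup_i |ρ_{i,i+m}|`. -/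
structure IsWeakDepStdGaussian {Ω : Type*} [MeasurableSpace Ω] (P : Measure Ω)
    (X : ℕ → Ω → ℝ) (ρ : ℕ → ℕ → ℝ) : Prop where
  meas : ∀ i, Measurable (X i)
  marginal : ∀ i, P.map (X i) = gaussianReal 0 1
  jointGaussian : ∀ (s : Finset ℕ) (c : ℕ → ℝ), ∃ (m : ℝ) (v : ℝ≥0),
      P.map (fun ω => ∑ i ∈ s, c i * X i ω) = gaussianReal m v
  corr : ∀ i j, i ≠ j → ∫ ω, X i ω * X j ω ∂P = ρ i j
  corr_lt : ∀ i j, i ≠ j → |ρ i j| < 1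
  sup_lt_one : gammaSup ρ < 1
  weakDep : (fun m : ℕ => rhobar ρ m) =o[atTop] (fun m : ℕ => 1 / Real.log m)

open Topology

namespace ProbabilityTheory

variable (ν : Measure ℝ) [IsProbabilityMeasure ν]

lemma continuous_cdf [NullSingletonClass ν] : Continuous (cdf ν) := by
  refine continuous_iff_continuousAt.2 fun x ↦ ?_
  rw [(monotone_cdf ν).continuousAt_iff_leftLim_eq_rightLim, StieltjesFunction.rightLim_eq]
  have hjump : ENNReal.ofReal (cdf ν x - Function.leftLim (cdf ν) x) = 0 := by
    rw [← StieltjesFunction.measure_singleton, measure_cdf, measure_singleton]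
  rw [ENNReal.ofReal_eq_zero] at hjump
  linarith [(monotone_cdf ν).leftLim_le (le_refl x)]

lemma strictMono_cdf [ν.IsOpenPosMeasure] : StrictMono (cdf ν) := by
  intro a b hab
  have hpos : 0 < ν (Set.Ioc a b) :=
    (isOpen_Ioo.measure_pos ν (Set.nonempty_Ioo.2 hab)).trans_le
      (measure_mono Set.Ioo_subset_Ioc_self)
  rw [← measure_cdf ν, StieltjesFunction.measure_Ioc, ENNReal.ofReal_pos] at hpos
  linarith

lemma exists_cdf_eq [NullSingletonClass ν] {y : ℝ} (hy : y ∈ Set.Ioo (0 : ℝ) 1) :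
    ∃ x, cdf ν x = y := by
  obtain ⟨a, ha⟩ := ((tendsto_cdf_atBot ν).eventually_lt_const hy.1).exists
  obtain ⟨b, hb⟩ := ((tendsto_cdf_atTop ν).eventually_const_lt hy.2).exists
  exact intermediate_value_univ a b (continuous_cdf ν) ⟨ha.le, hb.le⟩

end ProbabilityTheory

lemma isOpenPosMeasure_gaussianReal (m : ℝ) {v : ℝ≥0} (hv : v ≠ 0) :
    (gaussianReal m v).IsOpenPosMeasure :=
  (gaussianReal_absolutelyContinuous' m hv).isOpenPosMeasure

lemma Phi_eq_cdf : Phi = cdf (gaussianReal 0 1) := by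
  ext x
  rw [cdf_eq_real, Phi, measureReal_def]

lemma Phi_PhiInv {y : ℝ} (hy : y ∈ Set.Ioo (0 : ℝ) 1) : Phi (PhiInv y) = y := by
  have := nullSingletonClass_gaussianReal (μ := 0) one_ne_zero
  exact Function.invFun_eq (Phi_eq_cdf ▸ exists_cdf_eq _ hy)

lemma PhiInv_le_of_le_Phi {y t : ℝ} (hy : y ∈ Set.Ioo (0 : ℝ) 1) (h : y ≤ Phi t) :
    PhiInv y ≤ t := by
  have := isOpenPosMeasure_gaussianReal 0 one_ne_zero
  have hmono : StrictMono Phi := Phi_eq_cdf ▸ strictMono_cdf _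
  rwa [← hmono.le_iff_le, Phi_PhiInv hy]

lemma tendsto_Phi_atBot : Tendsto Phi atBot (𝓝 0) := Phi_eq_cdf ▸ tendsto_cdf_atBot _

lemma one_sub_Phi_eq (x : ℝ) : 1 - Phi x = (gaussianReal 0 1).real (Set.Ioi x) := by
  rw [Phi, ← measureReal_def, ← Set.compl_Iic, probReal_compl_eq_one_sub measurableSet_Iic]

lemma one_sub_Phi_le_exp {t : ℝ} (ht : 0 ≤ t) : 1 - Phi t ≤ Real.exp (-t ^ 2 / 2) :=
  calc 1 - Phi t = (gaussianReal 0 1).real {x | t < id x} := one_sub_Phi_eq t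
    _ ≤ (gaussianReal 0 1).real {x | t ≤ id x} := measureReal_mono fun x (hx : t < x) ↦ hx.le
    _ ≤ Real.exp (-t * t) * mgf id (gaussianReal 0 1) t :=
      measure_ge_le_exp_mul_mgf t ht (integrable_exp_mul_gaussianReal t)
    _ = Real.exp (-t ^ 2 / 2) := by
      rw [mgf_id_gaussianReal, ← Real.exp_add]
      congr 1
      push_cast
      ring

lemma toReal_measure_lt_eq_one_sub_Phi {Ω : Type*} [MeasurableSpace Ω] {P : Measure Ω}
    {Y : Ω → ℝ} {m : ℝ} (hY : P.map (fun ω ↦ Y ω - m) = gaussianReal 0 1) (τ : ℝ) :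
    (P {ω | τ < Y ω}).toReal = 1 - Phi (τ - m) := by
  have hmeas : AEMeasurable (fun ω ↦ Y ω - m) P :=
    aemeasurable_of_map_neZero (by rw [hY]; infer_instance)
  have hset : {ω | τ < Y ω} = (fun ω ↦ Y ω - m) ⁻¹' Set.Ioi (τ - m) := by
    ext ω
    simp [sub_lt_sub_iff_right]
  rw [hset, ← Measure.map_apply_of_aemeasurable hmeas measurableSet_Ioi, hY, one_sub_Phi_eq,
    measureReal_def]

lemma tendsto_sqrt_two_mul_log_atTop :
    Tendsto (fun n : ℕ ↦ √(2 * Real.log n)) atTop atTop :=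
  Real.tendsto_sqrt_atTop.comp
    ((Real.tendsto_log_atTop.comp tendsto_natCast_atTop_atTop).const_mul_atTop two_pos)

/-- `t = √(2 log n) + 1` is chosen so that `exp (-t ^ 2 / 2) ≤ exp (-√(2 log n)) / n`. -/
lemma eventually_PhiInv_le_sqrt_two_mul_log_add_one {y : ℕ → ℝ} {c : ℝ} (hc : 0 < c)
    (hy_pos : ∀ᶠ n in atTop, 0 < y n) (hy : ∀ᶠ n in atTop, y n ≤ 1 - c / n) :
    ∀ᶠ n in atTop, PhiInv (y n) ≤ √(2 * Real.log n) + 1 := by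
  have hexp : Tendsto (fun n : ℕ ↦ Real.exp (-√(2 * Real.log n))) atTop (𝓝 0) :=
    Real.tendsto_exp_atBot.comp (tendsto_neg_atTop_atBot.comp tendsto_sqrt_two_mul_log_atTop)
  filter_upwards [eventually_ge_atTop 1, hexp.eventually_le_const hc, hy_pos, hy]
    with n hn hexpn hy_posn hyn
  have hn' : (0 : ℝ) < n := by exact_mod_cast hn
  set s := √(2 * Real.log n)
  have hs : s ^ 2 = 2 * Real.log n :=
    Real.sq_sqrt (by have := Real.log_nonneg (Nat.one_le_cast.2 hn); linarith)
  have htail : 1 - Phi (s + 1) ≤ c / n :=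
    calc 1 - Phi (s + 1) ≤ Real.exp (-(s + 1) ^ 2 / 2) := one_sub_Phi_le_exp (by positivity)
      _ ≤ Real.exp (-s + -Real.log n) := Real.exp_le_exp.2 (by nlinarith)
      _ = Real.exp (-s) / n := by rw [Real.exp_add, Real.exp_neg (Real.log n),
          Real.exp_log hn', div_eq_mul_inv]
      _ ≤ c / n := by gcongr
  refine PhiInv_le_of_le_Phi ⟨hy_posn, ?_⟩ (by linarith)
  linarith [div_pos hc hn']

lemma Real.exp_neg_le_one_sub_half {x : ℝ} (hx₀ : 0 ≤ x) (hx₁ : x ≤ 1) :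
    Real.exp (-x) ≤ 1 - x / 2 := by
  rw [Real.exp_neg, inv_le_iff_one_le_mul₀ (Real.exp_pos x)]
  nlinarith [Real.add_one_le_exp x]

lemma neg_log_one_sub_pos {α : ℝ} (hα : α ∈ Set.Ioo (0 : ℝ) 1) : 0 < -Real.log (1 - α) :=
  neg_pos.2 (Real.log_neg (by linarith [hα.2]) (by linarith [hα.1]))

lemma cBon_le_sqrt_two_mul_log_add_one {α : ℝ} (hα : α ∈ Set.Ioo (0 : ℝ) 1) :
    ∀ᶠ n in atTop, cBon n α ≤ √(2 * Real.log n) + 1 := by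
  have hlim : Tendsto (fun n : ℕ ↦ -Real.log (1 - α) / n) atTop (𝓝 0) :=
    tendsto_const_nhds.div_atTop tendsto_natCast_atTop_atTop
  refine eventually_PhiInv_le_sqrt_two_mul_log_add_one (neg_log_one_sub_pos hα) ?_
    (.of_forall fun n ↦ le_rfl)
  filter_upwards [hlim.eventually_lt_const one_pos] with n hn
  linarith

lemma cSid_le_sqrt_two_mul_log_add_one {α : ℝ} (hα : α ∈ Set.Ioo (0 : ℝ) 1) :
    ∀ᶠ n in atTop, cSid n α ≤ √(2 * Real.log n) + 1 := by
  set c := -Real.log (1 - α)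
  have hc : 0 < c := neg_log_one_sub_pos hα
  have hsid (n : ℕ) : (1 - α) ^ ((1 : ℝ) / n) = Real.exp (-(c / n)) := by
    rw [Real.rpow_def_of_pos (by linarith [hα.2]), one_div, ← neg_div, neg_neg, div_eq_mul_inv]
  have hlim : Tendsto (fun n : ℕ ↦ c / n) atTop (𝓝 0) :=
    tendsto_const_nhds.div_atTop tendsto_natCast_atTop_atTop
  refine eventually_PhiInv_le_sqrt_two_mul_log_add_one (half_pos hc)
    (.of_forall fun n ↦ Real.rpow_pos_of_pos (by linarith [hα.2]) _) ?_
  filter_upwards [hlim.eventually_le_const one_pos] with n hn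
  rw [hsid]
  calc Real.exp (-(c / n)) ≤ 1 - c / n / 2 := Real.exp_neg_le_one_sub_half (by positivity) hn
    _ = 1 - c / 2 / n := by ring

lemma eventually_sqrt_two_mul_log_sub_one_le {a : ℕ → ℝ} {p : ℝ} (hp : 0 < p)
    (ha : Tendsto (fun n : ℕ ↦ a n / n) atTop (𝓝 p)) :
    ∀ᶠ n : ℕ in atTop, √(2 * Real.log n) - 1 ≤ √(2 * Real.log (a n)) := by
  filter_upwards [eventually_ge_atTop 1, ha.eventually_const_lt (half_lt_self hp),
    tendsto_sqrt_two_mul_log_atTop.eventually_ge_atTop (1 / 2 - Real.log (p / 2))]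
    with n hn han hsn
  have hn' : (0 : ℝ) < n := by exact_mod_cast hn
  have hlog : Real.log (p / 2) + Real.log n ≤ Real.log (a n) := by
    rw [← Real.log_mul (by positivity) hn'.ne']
    exact Real.log_le_log (by positivity) ((lt_div_iff₀ hn').1 han).le
  have hs : √(2 * Real.log n) ^ 2 = 2 * Real.log n :=
    Real.sq_sqrt (by have := Real.log_nonneg (Nat.one_le_cast.2 hn); linarith)
  exact Real.le_sqrt_of_sq_le (by nlinarith)

lemma tendsto_sub_atBot_of_le_mul {α : Type*} {l : Filter α} {s τ M : α → ℝ} {c : ℝ}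
    (hc₀ : 0 < c) (hc₁ : c < 1) (hs : Tendsto s l atTop) (hτ : ∀ᶠ a in l, τ a ≤ s a + 1)
    (hM : ∀ᶠ a in l, s a - 1 ≤ c * M a) : Tendsto (fun a ↦ τ a - M a) l atBot := by
  have hslope : 1 - 1 / c < 0 := by rw [sub_neg, lt_div_iff₀ hc₀]; linarith
  refine tendsto_atBot_mono' l ?_
    (tendsto_atBot_add_const_right l (1 + 1 / c) (hs.atTop_mul_const_of_neg hslope))
  filter_upwards [hτ, hM] with a hτa hMa
  have : (s a - 1) / c ≤ M a := by rwa [div_le_iff₀ hc₀, mul_comm]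
  calc τ a - M a ≤ s a + 1 - (s a - 1) / c := by linarith
    _ = s a * (1 - 1 / c) + (1 + 1 / c) := by ring

lemma tendsto_toReal_measure_of_exists_superset {ι Ω α : Type*} [MeasurableSpace Ω]
    {P : Measure Ω} [IsProbabilityMeasure P] {X : ι → Ω → ℝ} {μ : ι → ℝ}
    (hX : ∀ i, P.map (fun ω ↦ X i ω - μ i) = gaussianReal 0 1)
    {l : Filter α} {A : α → Set Ω} {τ M : α → ℝ}
    (hA : ∀ᶠ a in l, ∃ i, μ i = M a ∧ {ω | τ a < X i ω} ⊆ A a)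
    (hτ : Tendsto (fun a ↦ τ a - M a) l atBot) :
    Tendsto (fun a ↦ (P (A a)).toReal) l (𝓝 1) := by
  have hlower : Tendsto (fun a ↦ 1 - Phi (τ a - M a)) l (𝓝 1) := by
    simpa using tendsto_const_nhds.sub (tendsto_Phi_atBot.comp hτ)
  refine tendsto_of_tendsto_of_tendsto_of_le_of_le' hlower tendsto_const_nhds ?_
    (.of_forall fun a ↦ ENNReal.toReal_le_of_le_ofReal zero_le_one (by simpa using prob_le_one))
  filter_upwards [hA] with a ⟨i, hi, hsub⟩
  rw [← hi, ← toReal_measure_lt_eq_one_sub_Phi (hX i)]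
  exact ENNReal.toReal_mono (measure_ne_top _ _) (measure_mono hsub)

theorem anypwr_one_sided_max_mean_general
    {Ω : Type*} [MeasurableSpace Ω] (P : Measure Ω) [IsProbabilityMeasure P]
    (X : ℕ → Ω → ℝ) (μ : ℕ → ℝ) (ρ : ℕ → ℕ → ℝ)
    (hX : IsWeakDepStdGaussian P (fun i ω => X i ω - μ i) ρ)
    (α : ℝ) (hα : α ∈ Set.Ioo (0 : ℝ) 1)
    (p₁ : ℝ) (hp₁ : p₁ ∈ Set.Ioc (0 : ℝ) 1)
    (hp₁lim : Tendsto
      (fun n : ℕ => ((((Finset.range n).filter (fun i => 0 < μ i)).card : ℝ) / n))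
      atTop (nhds p₁))
    (hratio : ∃ L < (1 : ℝ), Tendsto
      (fun n : ℕ =>
        Real.sqrt (2 * Real.log (((Finset.range n).filter (fun i => 0 < μ i)).card : ℝ)) /
          sSup (μ '' {i : ℕ | i < n ∧ 0 < μ i}))
      atTop (nhds L)) :
    Tendsto (fun n : ℕ => (P {ω | ∃ i < n, 0 < μ i ∧ cBon n α < X i ω}).toReal)
        atTop (nhds 1) ∧
    Tendsto (fun n : ℕ => (P {ω | ∃ i < n, 0 < μ i ∧ cSid n α < X i ω}).toReal)
        atTop (nhds 1) := by
  obtain ⟨L, hL, hLlim⟩ := hratio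
  obtain ⟨c, hLc, hc₁⟩ := exists_between (max_lt hL one_pos)
  set M := fun n : ℕ ↦ sSup (μ '' {i : ℕ | i < n ∧ 0 < μ i})
  have hargmax : ∀ᶠ n in atTop, ∃ i, i < n ∧ 0 < μ i ∧ μ i = M n := by
    filter_upwards [hp₁lim.eventually_const_lt hp₁.1] with n hn
    obtain ⟨i, hi⟩ := Finset.card_pos.1 (Nat.pos_of_ne_zero fun h ↦ by
      rw [h, Nat.cast_zero, zero_div] at hn; linarith [hp₁.1])
    have hfin : {i : ℕ | i < n ∧ 0 < μ i}.Finite := (Set.finite_Iio n).subset fun i hi ↦ hi.1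
    obtain ⟨j, hj, hjM⟩ :=
      (Set.Nonempty.image μ ⟨i, by simpa using hi⟩).csSup_mem (hfin.image μ)
    exact ⟨j, hj.1, hj.2, hjM⟩
  have hM : ∀ᶠ n : ℕ in atTop, √(2 * Real.log n) - 1 ≤ c * M n := by
    filter_upwards [hargmax, eventually_sqrt_two_mul_log_sub_one_le hp₁.1 hp₁lim,
      hLlim.eventually_lt_const ((le_max_left _ _).trans_lt hLc)]
      with n ⟨i, _, hi, hiM⟩ hn hr
    linarith [(div_lt_iff₀ (hi.trans_eq hiM)).1 hr]
  have hpower (τ : ℕ → ℝ) (hτ : ∀ᶠ n : ℕ in atTop, τ n ≤ √(2 * Real.log n) + 1) :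
      Tendsto (fun n : ℕ ↦ (P {ω | ∃ i < n, 0 < μ i ∧ τ n < X i ω}).toReal) atTop (𝓝 1) :=
    tendsto_toReal_measure_of_exists_superset hX.marginal
      (hargmax.mono fun n ⟨i, hin, hi, hiM⟩ ↦ ⟨i, hiM, fun ω hω ↦ ⟨i, hin, hi, hω⟩⟩)
      (tendsto_sub_atBot_of_le_mul ((le_max_right _ _).trans_lt hLc) hc₁
        tendsto_sqrt_two_mul_log_atTop hτ hM)
  exact ⟨hpower _ (cBon_le_sqrt_two_mul_log_add_one hα),
    hpower _ (cSid_le_sqrt_two_mul_log_add_one hα)⟩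

/-- One-sided power: if `n₁ → ∞`, `n₁/n → p₁ ∈ (0,1]`, and
`lim √(2 log n₁)/μ_{n₁} < 1` where `μ_{n₁} = max{μ i : i ∈ I₁}`, then for both the adjusted
Bonferroni and Sidak procedures, `AnyPwr → 1`. -/
theorem anypwr_one_sided_max_mean
    {Ω : Type*} [MeasurableSpace Ω] (P : Measure Ω) [IsProbabilityMeasure P]
    (X : ℕ → Ω → ℝ) (μ : ℕ → ℝ) (ρ : ℕ → ℕ → ℝ)
    (hX : IsWeakDepStdGaussian P (fun i ω => X i ω - μ i) ρ)
    (hone : ∀ i, μ i = 0 ∨ 0 < μ i)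
    (α : ℝ) (hα : α ∈ Set.Ioo (0 : ℝ) 1)
    (hn1 : Tendsto
      (fun n : ℕ => ((Finset.range n).filter (fun i => 0 < μ i)).card) atTop atTop)
    (p₁ : ℝ) (hp₁ : p₁ ∈ Set.Ioc (0 : ℝ) 1)
    (hp₁lim : Tendsto
      (fun n : ℕ => ((((Finset.range n).filter (fun i => 0 < μ i)).card : ℝ) / n))
      atTop (nhds p₁))
    (hratio : ∃ L < (1 : ℝ), Tendsto
      (fun n : ℕ =>
        Real.sqrt (2 * Real.log (((Finset.range n).filter (fun i => 0 < μ i)).card : ℝ)) /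
          sSup (μ '' {i : ℕ | i < n ∧ 0 < μ i}))
      atTop (nhds L)) :
    Tendsto (fun n : ℕ => (P {ω | ∃ i < n, 0 < μ i ∧ cBon n α < X i ω}).toReal)
        atTop (nhds 1) ∧
    Tendsto (fun n : ℕ => (P {ω | ∃ i < n, 0 < μ i ∧ cSid n α < X i ω}).toReal)
        atTop (nhds 1) :=
  anypwr_one_sided_max_mean_general P X μ ρ hX α hα p₁ hp₁ hp₁lim hratio
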